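/- arXiv:2308.01877 — 2 statements merged into one kernel-verified Lean document; each statement's English description precedes it below -/
import Mathlib

section
/- If X is a geodesic metric space and there exists D > 0 such that every geodesic segment in X is D-contracting, then every geodesic bigon in X is 10D-thin: for any two geodesics γ and κ with the same endpoints x, y, each of γ and κ is contained in the 10D-neighborhood of the other (indeed diam(γ ∪ κ) < 2D if d(x,y) < D, and otherwise each is within Hausdorff distance 10D of the other). -/
/-!
Let `z` be a point of `κ` farther than `2D` from `γ`. Around `z` take the maximal subsegment
`[p, q]` of `κ` that stays at distance `≥ 2D` from `γ`; since `κ` starts and ends on `γ`, its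
endpoints are within `2D` of `γ`. This subsegment is farther than `D` from `γ`, so by contraction
the nearest-point projections of `p` and `q` are less than `D` apart, and the triangle inequality
gives `d(p, q) < 5D`. Hence `z` is within `2D + 5D = 7D` of `γ`. A bigon over a base of length
`< D` lies in the ball of radius `d(x, y)` about `x`, whence the diameter bound.
-/

open Metric Set

variable {X : Type*} [MetricSpace X]

/-- Nearest-point projection of the point `x` to the set `A`. -/
noncomputable def proj (A : Set X) (x : X) : Set X :=
  {a | a ∈ A ∧ dist x a = infDist x A}

/-- Nearest-point projection of the set `B` to the set `A`. -/
noncomputable def projSet (A B : Set X) : Set X := ⋃ x ∈ B, proj A x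

/-- Distance between two subsets of a metric space. -/
noncomputable def setDist (A B : Set X) : ℝ := sInf (Set.image2 dist A B)

/-- `γ` is a geodesic segment from `x` to `y` (image of a unit-speed parameterization). -/
def IsGeodesicSeg (γ : Set X) (x y : X) : Prop :=
  ∃ (f : ℝ → X) (L : ℝ), 0 ≤ L ∧
    (∀ s ∈ Icc 0 L, ∀ t ∈ Icc 0 L, dist (f s) (f t) = |s - t|) ∧
    f 0 = x ∧ f L = y ∧ γ = f '' Icc 0 L

/-- `γ` is a geodesic segment. -/
def IsGeodesic (γ : Set X) : Prop := ∃ x y, IsGeodesicSeg γ x y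

/-- `γ` is `D`-contracting: any geodesic at distance `> D` from `γ`
projects onto `γ` with diameter `< D`. -/
def IsContractingSet (D : ℝ) (γ : Set X) : Prop :=
  ∀ κ : Set X, IsGeodesic κ → D < setDist γ κ → diam (projSet γ κ) < D

/-- `X` is a geodesic metric space. -/
def GeodesicSpace (X : Type*) [MetricSpace X] : Prop :=
  ∀ x y : X, ∃ γ : Set X, IsGeodesicSeg γ x y

theorem ContinuousOn.exists_Icc_excursion {g : ℝ → ℝ} {l r c t : ℝ}
    (hg : ContinuousOn g (Icc l r)) (hl : g l ≤ c) (hr : g r ≤ c) (ht : t ∈ Icc l r)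
    (hct : c < g t) :
    ∃ a b, l ≤ a ∧ a ≤ t ∧ t ≤ b ∧ b ≤ r ∧ g a ≤ c ∧ g b ≤ c ∧ ∀ s ∈ Icc a b, c ≤ g s := by
  set A := Icc l t ∩ g ⁻¹' Iic c
  set B := Icc t r ∩ g ⁻¹' Iic c
  have hA : IsCompact A := isCompact_Icc.of_isClosed_subset
    ((hg.mono (Icc_subset_Icc_right ht.2)).preimage_isClosed_of_isClosed isClosed_Icc isClosed_Iic)
    inter_subset_left
  have hB : IsCompact B := isCompact_Icc.of_isClosed_subset
    ((hg.mono (Icc_subset_Icc_left ht.1)).preimage_isClosed_of_isClosed isClosed_Icc isClosed_Iic)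
    inter_subset_left
  obtain ⟨⟨hla, hat⟩, hga⟩ := hA.sSup_mem ⟨l, ⟨le_rfl, ht.1⟩, hl⟩
  obtain ⟨⟨htb, hbr⟩, hgb⟩ := hB.sInf_mem ⟨r, ⟨ht.2, le_rfl⟩, hr⟩
  refine ⟨sSup A, sInf B, hla, hat, htb, hbr, hga, hgb, ?_⟩
  have hat' : sSup A < t := hat.lt_of_ne fun h => (h ▸ hga : g t ≤ c).not_gt hct
  have hbelow : Ioo (sSup A) (sInf B) ⊆ Icc l r ∩ g ⁻¹' Ici c := by
    intro s ⟨has, hsb⟩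
    refine ⟨⟨hla.trans has.le, hsb.le.trans hbr⟩, show c ≤ g s from le_of_not_ge fun hsc => ?_⟩
    rcases le_total s t with hst | hts
    · exact has.not_ge (le_csSup hA.bddAbove ⟨⟨hla.trans has.le, hst⟩, hsc⟩)
    · exact hsb.not_ge (csInf_le hB.bddBelow ⟨⟨hts, hsb.le.trans hbr⟩, hsc⟩)
  have hclosed : IsClosed (Icc l r ∩ g ⁻¹' Ici c) :=
    hg.preimage_isClosed_of_isClosed isClosed_Icc isClosed_Ici
  rw [← closure_Ioo (hat'.trans_le htb).ne]
  exact fun s hs => (hclosed.closure_subset_iff.2 hbelow hs).2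

theorem le_setDist_of_forall_le_infDist {A B : Set X} {r : ℝ} (hA : A.Nonempty)
    (hB : B.Nonempty) (h : ∀ z ∈ B, r ≤ infDist z A) : r ≤ setDist A B := by
  refine le_csInf (hA.image2 hB) ?_
  rintro _ ⟨p, hp, q, hq, rfl⟩
  exact (h q hq).trans (dist_comm p q ▸ infDist_le_dist_of_mem hp)

theorem lipschitzOnWith_one_of_dist_eq_abs_sub {f : ℝ → X} {S : Set ℝ}
    (hf : ∀ s ∈ S, ∀ t ∈ S, dist (f s) (f t) = |s - t|) : LipschitzOnWith 1 f S :=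
  LipschitzOnWith.of_dist_le_mul fun s hs t ht => by simp [hf s hs t ht, Real.dist_eq]

theorem isGeodesicSeg_image_Icc {f : ℝ → X} {a b : ℝ} (hab : a ≤ b)
    (hf : ∀ s ∈ Icc a b, ∀ t ∈ Icc a b, dist (f s) (f t) = |s - t|) :
    IsGeodesicSeg (f '' Icc a b) (f a) (f b) := by
  refine ⟨fun s => f (a + s), b - a, sub_nonneg.2 hab, ?_, by simp, by simp, ?_⟩
  · intro s hs u hu
    rw [hf _ ⟨by linarith [hs.1], by linarith [hs.2]⟩ _ ⟨by linarith [hu.1], by linarith [hu.2]⟩]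
    ring_nf
  · rw [← image_image f (a + ·), image_const_add_Icc, add_zero, add_sub_cancel]

namespace IsGeodesicSeg

variable {γ : Set X} {x y : X}

theorem left_mem (h : IsGeodesicSeg γ x y) : x ∈ γ := by
  obtain ⟨f, L, hL, -, rfl, -, rfl⟩ := h
  exact ⟨0, ⟨le_rfl, hL⟩, rfl⟩

theorem right_mem (h : IsGeodesicSeg γ x y) : y ∈ γ := by
  obtain ⟨f, L, hL, -, -, rfl, rfl⟩ := h
  exact ⟨L, ⟨hL, le_rfl⟩, rfl⟩

theorem isCompact (h : IsGeodesicSeg γ x y) : IsCompact γ := by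
  obtain ⟨f, L, -, hf, -, -, rfl⟩ := h
  exact isCompact_Icc.image_of_continuousOn (lipschitzOnWith_one_of_dist_eq_abs_sub hf).continuousOn

theorem subset_closedBall (h : IsGeodesicSeg γ x y) : γ ⊆ closedBall x (dist x y) := by
  obtain ⟨f, L, hL, hf, rfl, rfl, rfl⟩ := h
  rintro _ ⟨s, hs, rfl⟩
  have h0 : (0 : ℝ) ∈ Icc 0 L := ⟨le_rfl, hL⟩
  rw [mem_closedBall, hf s hs 0 h0, hf 0 h0 L ⟨hL, le_rfl⟩, sub_zero, zero_sub, abs_neg,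
    abs_of_nonneg hs.1, abs_of_nonneg hL]
  exact hs.2

end IsGeodesicSeg

namespace IsContractingSet

variable {D : ℝ} {γ κ : Set X} {p q : X}

theorem dist_lt (hγD : IsContractingSet D γ) (hγ : IsCompact γ) (hκ : IsGeodesicSeg κ p q)
    (hfar : D < setDist γ κ) : dist p q < infDist p γ + D + infDist q γ := by
  rcases γ.eq_empty_or_nonempty with rfl | hne
  · have hproj := hγD κ ⟨p, q, hκ⟩ hfar
    simp only [setDist, image2_empty_left, Real.sInf_empty] at hfar
    linarith [diam_nonneg (s := projSet ∅ κ)]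
  obtain ⟨p', hp'γ, hpp'⟩ := hγ.exists_infDist_eq_dist hne p
  obtain ⟨q', hq'γ, hqq'⟩ := hγ.exists_infDist_eq_dist hne q
  have hproj_sub : projSet γ κ ⊆ γ := iUnion₂_subset fun _ _ _ h => h.1
  have hp'q' : dist p' q' < D :=
    (dist_le_diam_of_mem (hγ.isBounded.subset hproj_sub)
      (mem_biUnion hκ.left_mem ⟨hp'γ, hpp'.symm⟩)
      (mem_biUnion hκ.right_mem ⟨hq'γ, hqq'.symm⟩)).trans_lt (hγD κ ⟨p, q, hκ⟩ hfar)
  calc dist p q ≤ dist p p' + dist p' q' + dist q' q := dist_triangle4 _ _ _ _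
    _ < infDist p γ + D + infDist q γ := by rw [dist_comm q' q, ← hpp', ← hqq']; linarith

theorem infDist_le_of_isGeodesicSeg (hD : 0 < D) (hγD : IsContractingSet D γ)
    (hγ : IsCompact γ) (hx : x ∈ γ) (hy : y ∈ γ) (hκ : IsGeodesicSeg κ x y) :
    ∀ z ∈ κ, infDist z γ ≤ 7 * D := by
  obtain ⟨f, L, hL, hf, rfl, rfl, rfl⟩ := hκ
  rintro _ ⟨t, ht, rfl⟩
  set g := fun s => infDist (f s) γ
  have hg : ContinuousOn g (Icc 0 L) :=
    (continuous_infDist_pt γ).comp_continuousOn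
      (lipschitzOnWith_one_of_dist_eq_abs_sub hf).continuousOn
  rcases le_or_gt (g t) (2 * D) with hgt | hgt
  · change g t ≤ 7 * D; linarith
  obtain ⟨a, b, h0a, hat, htb, hbL, hga, hgb, hexc⟩ := hg.exists_Icc_excursion
    (by simp [g, infDist_zero_of_mem hx, hD.le]) (by simp [g, infDist_zero_of_mem hy, hD.le])
    ht hgt
  have hab := hat.trans htb
  have hsub : Icc a b ⊆ Icc 0 L := Icc_subset_Icc h0a hbL
  have hseg := isGeodesicSeg_image_Icc hab fun s hs u hu => hf s (hsub hs) u (hsub hu)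
  have hsetDist : 2 * D ≤ setDist γ (f '' Icc a b) :=
    le_setDist_of_forall_le_infDist ⟨_, hx⟩ ⟨_, hseg.left_mem⟩
      (by rintro _ ⟨s, hs, rfl⟩; exact hexc s hs)
  have hlen : b - a < g a + D + g b := by
    have := hγD.dist_lt hγ hseg (by linarith)
    rwa [hf a (hsub ⟨le_rfl, hab⟩) b (hsub ⟨hab, le_rfl⟩), abs_sub_comm,
      abs_of_nonneg (by linarith)] at this
  calc g t ≤ g a + dist (f t) (f a) := infDist_le_infDist_add_dist
    _ = g a + (t - a) := by
      rw [hf t ht a (hsub ⟨le_rfl, hab⟩), abs_of_nonneg (by linarith)]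
    _ ≤ 7 * D := by linarith

end IsContractingSet

theorem stmt3_general {X : Type*} [MetricSpace X]
    (D : ℝ) (hD : 0 < D)
    (hall : ∀ γ : Set X, IsGeodesic γ → IsContractingSet D γ)
    (x y : X) (γ κ : Set X)
    (hγ : IsGeodesicSeg γ x y) (hκ : IsGeodesicSeg κ x y) :
    (dist x y < D → diam (γ ∪ κ) < 2 * D) ∧
    (D ≤ dist x y → hausdorffDist γ κ ≤ 10 * D) ∧
    (∀ z ∈ γ, infDist z κ ≤ 10 * D) ∧
    (∀ z ∈ κ, infDist z γ ≤ 10 * D) := by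
  have hκγ : ∀ z ∈ κ, infDist z γ ≤ 10 * D := fun z hz =>
    ((hall γ ⟨x, y, hγ⟩).infDist_le_of_isGeodesicSeg hD hγ.isCompact hγ.left_mem hγ.right_mem
      hκ z hz).trans (by linarith)
  have hγκ : ∀ z ∈ γ, infDist z κ ≤ 10 * D := fun z hz =>
    ((hall κ ⟨x, y, hκ⟩).infDist_le_of_isGeodesicSeg hD hκ.isCompact hκ.left_mem hκ.right_mem
      hγ z hz).trans (by linarith)
  refine ⟨fun hxy => ?_, fun _ => hausdorffDist_le_of_infDist (by positivity) hγκ hκγ, hγκ, hκγ⟩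
  calc diam (γ ∪ κ) ≤ 2 * dist x y := diam_le_of_subset_closedBall dist_nonneg
        (union_subset hγ.subset_closedBall hκ.subset_closedBall)
    _ < 2 * D := by linarith

/-- if every geodesic in a geodesic space is `D`-contracting, then
geodesic bigons are `10D`-thin. -/
theorem stmt3 {X : Type*} [MetricSpace X] [ProperSpace X]
    (hX : GeodesicSpace X) (D : ℝ) (hD : 0 < D)
    (hall : ∀ γ : Set X, IsGeodesic γ → IsContractingSet D γ)
    (x y : X) (γ κ : Set X)
    (hγ : IsGeodesicSeg γ x y) (hκ : IsGeodesicSeg κ x y) :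
    (dist x y < D → diam (γ ∪ κ) < 2 * D) ∧
    (D ≤ dist x y → hausdorffDist γ κ ≤ 10 * D) ∧
    (∀ z ∈ γ, infDist z κ ≤ 10 * D) ∧
    (∀ z ∈ κ, infDist z γ ≤ 10 * D) :=
  stmt3_general D hD hall x y γ κ hγ hκ
end

section
/- Let X be a proper geodesic metric space, let D > 0, and suppose γ is a geodesic within Hausdorff distance C of a D-contracting geodesic γ'. Then γ is E-contracting for some constant E depending only on C and D. -/
open Metric Set

variable {X : Type*} [MetricSpace X]

section Aux

variable {X : Type*} [MetricSpace X]

lemma geodesicSeg_continuousOn {f : ℝ → X} {L : ℝ}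
    (hf : ∀ s ∈ Icc 0 L, ∀ t ∈ Icc 0 L, dist (f s) (f t) = |s - t|) :
    ContinuousOn f (Icc (0:ℝ) L) := by
  apply LipschitzOnWith.continuousOn (K := 1)
  apply LipschitzOnWith.of_dist_le_mul
  intro s hs t ht
  rw [hf s hs t ht, Real.dist_eq]
  simp

lemma isGeodesic_compact_nonempty {γ : Set X} (h : IsGeodesic γ) :
    IsCompact γ ∧ γ.Nonempty := by
  obtain ⟨x, y, f, L, hL, hf, hf0, hfL, rfl⟩ := h
  exact ⟨isCompact_Icc.image_of_continuousOn (geodesicSeg_continuousOn hf),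
    ⟨f 0, mem_image_of_mem f ⟨le_refl 0, hL⟩⟩⟩

lemma projSet_subset (A B : Set X) : projSet A B ⊆ A := by
  intro p hp
  simp only [projSet, mem_iUnion] at hp
  obtain ⟨x, hx, hpA, _⟩ := hp
  exact hpA

lemma setDist_le_infDist {γ κ : Set X} (hγ : γ.Nonempty) {z : X} (hz : z ∈ κ) :
    setDist γ κ ≤ infDist z γ := by
  have : Nonempty ↥γ := hγ.to_subtype
  rw [infDist_eq_iInf]
  apply le_ciInf
  rintro ⟨w, hw⟩
  simp only
  rw [dist_comm]
  apply csInf_le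
  · exact ⟨0, fun b hb => by
      obtain ⟨a, ha, c, hc, rfl⟩ := hb
      exact dist_nonneg⟩
  · exact ⟨w, hw, z, hz, rfl⟩

lemma lt_setDist {γ κ : Set X} (hγ : γ.Nonempty) (hκ : κ.Nonempty) {c : ℝ}
    (h : ∀ z ∈ κ, c ≤ infDist z γ) : c ≤ setDist γ κ := by
  apply le_csInf
  · obtain ⟨w, hw⟩ := hγ; obtain ⟨z, hz⟩ := hκ
    exact ⟨dist w z, w, hw, z, hz, rfl⟩
  · rintro b ⟨w, hw, z, hz, rfl⟩
    calc c ≤ infDist z γ := h z hz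
      _ ≤ dist z w := infDist_le_dist_of_mem hw
      _ = dist w z := dist_comm _ _

/-- Near-projections onto a contracting geodesic are close to true projections. -/
lemma near_proj_close {X : Type} [MetricSpace X] [ProperSpace X]
    (hgeo : GeodesicSpace X) {D ε A : ℝ} (hD : 0 < D) (hε : 0 < ε)
    {γ' : Set X} (hcomp : IsCompact γ') (hne : γ'.Nonempty)
    (hcon : IsContractingSet D γ')
    (x q : X) (hq : q ∈ γ') (hr : D + ε < infDist x γ')
    (hxq : dist x q ≤ infDist x γ' + A)
    {p' : X} (hp' : p' ∈ proj γ' x) :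
    dist q p' ≤ A + 3 * D + 2 * ε := by
  obtain ⟨κ, f, L, hL, hiso, hf0, hfL, hκ⟩ := hgeo x q
  set g : ℝ → ℝ := fun t => infDist (f t) γ' with hg
  have hcont : ContinuousOn f (Icc 0 L) := geodesicSeg_continuousOn hiso
  have hgcont : ContinuousOn g (Icc 0 L) :=
    (continuous_infDist_pt γ').comp_continuousOn hcont
  have hLdist : dist x q = L := by
    rw [← hf0, ← hfL, hiso 0 ⟨le_refl 0, hL⟩ L ⟨hL, le_refl L⟩]
    rw [abs_of_nonpos (by linarith)]; ring
  -- the set of times where distance to γ' is ≤ D + ε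
  set S : Set ℝ := Icc 0 L ∩ g ⁻¹' (Iic (D + ε)) with hSdef
  have hSclosed : IsClosed S :=
    hgcont.preimage_isClosed_of_isClosed isClosed_Icc isClosed_Iic
  have hLS : L ∈ S := by
    refine ⟨⟨hL, le_refl L⟩, ?_⟩
    simp only [mem_preimage, mem_Iic, hg, hfL]
    calc infDist q γ' ≤ dist q q := infDist_le_dist_of_mem hq
      _ = 0 := dist_self q
      _ ≤ D + ε := by linarith
  have hSbdd : BddBelow S := ⟨0, fun t ht => ht.1.1⟩
  set s := sInf S with hs
  have hsS : s ∈ S := hSclosed.csInf_mem ⟨L, hLS⟩ hSbdd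
  have hs0 : 0 ≤ s := hsS.1.1
  have hsL : s ≤ L := hsS.1.2
  have hgs_le : g s ≤ D + ε := hsS.2
  -- g u ≥ D + ε on [0, s]
  have hglb : ∀ u ∈ Icc 0 s, D + ε ≤ g u := by
    have hlt : ∀ u ∈ Ico 0 s, D + ε ≤ g u := by
      intro u hu
      by_contra hcon'
      push_neg at hcon'
      have : u ∈ S := ⟨⟨hu.1, hu.2.le.trans hsL⟩, le_of_lt hcon'⟩
      exact absurd (csInf_le hSbdd this) (not_le.mpr hu.2)
    intro u hu
    have hgs_ge : D + ε ≤ g s := by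
      rcases eq_or_lt_of_le hs0 with h0 | h0
      · have hgx : g 0 = infDist x γ' := by simp [hg, hf0]
        rw [← h0, hgx]; linarith
      · have hT : IsClosed (Icc 0 L ∩ g ⁻¹' Ici (D + ε)) :=
          hgcont.preimage_isClosed_of_isClosed isClosed_Icc isClosed_Ici
        have hsub : Ico 0 s ⊆ Icc 0 L ∩ g ⁻¹' Ici (D + ε) := by
          intro v hv
          exact ⟨⟨hv.1, hv.2.le.trans hsL⟩, hlt v hv⟩
        have hcl : s ∈ closure (Ico 0 s) := by
          rw [closure_Ico (ne_of_lt h0)]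
          exact ⟨le_of_lt h0, le_refl s⟩
        exact (hT.closure_subset ((closure_mono hsub) hcl)).2
    rcases lt_or_eq_of_le hu.2 with h | h
    · exact hlt u ⟨hu.1, h⟩
    · rw [h]; exact hgs_ge
  -- the sub-geodesic
  set κ₁ : Set X := f '' Icc 0 s with hκ₁
  have hκ₁geo : IsGeodesic κ₁ :=
    ⟨f 0, f s, f, s, hs0,
      fun u hu v hv => hiso u ⟨hu.1, hu.2.trans hsL⟩ v ⟨hv.1, hv.2.trans hsL⟩, rfl, rfl, rfl⟩
  have hκ₁ne : κ₁.Nonempty := ⟨f 0, mem_image_of_mem f ⟨le_refl 0, hs0⟩⟩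
  have hsd : D + ε ≤ setDist γ' κ₁ := by
    apply lt_setDist hne hκ₁ne
    rintro z ⟨u, hu, rfl⟩
    exact hglb u hu
  have hdiam : diam (projSet γ' κ₁) < D := hcon κ₁ hκ₁geo (by linarith)
  -- projections
  obtain ⟨p'', hp''mem, hp''dist⟩ := hcomp.exists_infDist_eq_dist hne (f s)
  have hp'in : p' ∈ projSet γ' κ₁ := by
    simp only [projSet, mem_iUnion]
    exact ⟨f 0, mem_image_of_mem f ⟨le_refl 0, hs0⟩, by rw [hf0]; exact hp'⟩
  have hp''in : p'' ∈ projSet γ' κ₁ := by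
    simp only [projSet, mem_iUnion]
    exact ⟨f s, mem_image_of_mem f ⟨hs0, le_refl s⟩, hp''mem, hp''dist.symm⟩
  have hbdd : Bornology.IsBounded (projSet γ' κ₁) :=
    hcomp.isBounded.subset (projSet_subset _ _)
  have hd1 : dist p'' p' ≤ diam (projSet γ' κ₁) := dist_le_diam_of_mem hbdd hp''in hp'in
  -- distances along f
  have hxfs : dist x (f s) = s := by
    rw [← hf0, hiso 0 ⟨le_refl 0, hL⟩ s ⟨hs0, hsL⟩, abs_of_nonpos (by linarith)]; ring
  have hqfs : dist q (f s) = L - s := by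
    rw [← hfL, hiso L ⟨hL, le_refl L⟩ s ⟨hs0, hsL⟩, abs_of_nonneg (by linarith)]
  have hrs : infDist x γ' ≤ s + (D + ε) := by
    calc infDist x γ' ≤ infDist (f s) γ' + dist x (f s) := infDist_le_infDist_add_dist
      _ = g s + s := by rw [hxfs]
      _ ≤ s + (D + ε) := by linarith [hgs_le]
  have hfsp'' : dist (f s) p'' ≤ D + ε := by rw [← hp''dist]; exact hgs_le
  have hLbound : L ≤ infDist x γ' + A := by rw [← hLdist]; exact hxq
  calc dist q p' ≤ dist q (f s) + dist (f s) p'' + dist p'' p' := dist_triangle4 _ _ _ _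
    _ ≤ (L - s) + (D + ε) + D := by
        have := hd1.trans hdiam.le
        linarith [hqfs, hfsp'', this]
    _ ≤ A + 3 * D + 2 * ε := by linarith

end Aux

/-- a geodesic within Hausdorff distance `C` of a `D`-contracting
geodesic is `E`-contracting, with `E` depending only on `C` and `D`. -/



theorem stmt4 (C D : ℝ) (hC : 0 ≤ C) (hD : 0 < D) :
    ∃ E : ℝ, ∀ (X : Type) [MetricSpace X] [ProperSpace X],
      GeodesicSpace X → ∀ γ γ' : Set X,
      IsGeodesic γ → IsGeodesic γ' → IsContractingSet D γ' →
      hausdorffDist γ γ' ≤ C → IsContractingSet E γ := by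
  refine ⟨6 * C + 10 * D, ?_⟩
  intro X _ _ hgeo γ γ' hγ hγ' hcon hHaus
  intro κ hκgeo hdist
  obtain ⟨hγc, hγne⟩ := isGeodesic_compact_nonempty hγ
  obtain ⟨hγ'c, hγ'ne⟩ := isGeodesic_compact_nonempty hγ'
  obtain ⟨hκc, hκne⟩ := isGeodesic_compact_nonempty hκgeo
  have hedist : EMetric.hausdorffEdist γ γ' ≠ ⊤ :=
    hausdorffEdist_ne_top_of_nonempty_of_bounded hγne hγ'ne hγc.isBounded hγ'c.isBounded
  have hedist' : EMetric.hausdorffEdist γ' γ ≠ ⊤ := by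
    unfold EMetric.hausdorffEdist at hedist ⊢; rwa [EMetric.hausdorffEdist_comm]
  -- z on κ is far from both γ and γ'
  have hfar : ∀ z ∈ κ, 6 * C + 10 * D < infDist z γ := by
    intro z hz
    exact lt_of_lt_of_le hdist (setDist_le_infDist hγne hz)
  have hfar' : ∀ z ∈ κ, 5 * C + 10 * D < infDist z γ' := by
    intro z hz
    have h1 : infDist z γ ≤ infDist z γ' + hausdorffDist γ' γ :=
      infDist_le_infDist_add_hausdorffDist hedist'
    have h2 : hausdorffDist γ' γ ≤ C := by rwa [hausdorffDist_comm]
    have := hfar z hz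
    linarith
  -- key : any projection of z ∈ κ to γ is within 3C + 4D of any projection to γ'
  have key : ∀ z ∈ κ, ∀ p ∈ proj γ z, ∀ p' ∈ proj γ' z, dist p p' ≤ 3 * C + 4 * D := by
    intro z hz p hp p' hp'
    -- point q on γ' close to p
    have hpq : infDist p γ' ≤ C :=
      (infDist_le_hausdorffDist_of_mem hp.1 hedist).trans hHaus
    obtain ⟨q, hqmem, hqdist⟩ := hγ'c.exists_infDist_eq_dist hγ'ne p
    have hpqC : dist p q ≤ C := by rw [← hqdist]; exact hpq
    -- z is close to q, a near-projection
    have hzγγ' : infDist z γ ≤ infDist z γ' + C := by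
      have h1 : infDist z γ ≤ infDist z γ' + hausdorffDist γ' γ :=
        infDist_le_infDist_add_hausdorffDist hedist'
      have h2 : hausdorffDist γ' γ ≤ C := by rwa [hausdorffDist_comm]
      linarith
    have hzq : dist z q ≤ infDist z γ' + 2 * C := by
      calc dist z q ≤ dist z p + dist p q := dist_triangle _ _ _
        _ ≤ infDist z γ + C := by rw [hp.2]; linarith
        _ ≤ infDist z γ' + 2 * C := by linarith
    have hrr : D + D / 2 < infDist z γ' := by
      have := hfar' z hz; linarith
    have hnear : dist q p' ≤ 2 * C + 3 * D + 2 * (D / 2) :=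
      near_proj_close hgeo hD (by linarith : (0:ℝ) < D / 2) hγ'c hγ'ne hcon
        z q hqmem hrr hzq hp'
    calc dist p p' ≤ dist p q + dist q p' := dist_triangle _ _ _
      _ ≤ C + (2 * C + 3 * D + 2 * (D / 2)) := by linarith
      _ = 3 * C + 4 * D := by ring
  -- κ is far from γ', so its projection there has diameter < D
  have hsd' : D < setDist γ' κ := by
    have : 5 * C + 10 * D ≤ setDist γ' κ :=
      lt_setDist hγ'ne hκne (fun z hz => (hfar' z hz).le)
    linarith
  have hdiam' : diam (projSet γ' κ) < D := hcon κ hκgeo hsd'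
  have hbdd' : Bornology.IsBounded (projSet γ' κ) :=
    hγ'c.isBounded.subset (projSet_subset _ _)
  -- conclude
  have hdiam : diam (projSet γ κ) ≤ 6 * C + 9 * D := by
    apply diam_le_of_forall_dist_le (by linarith)
    intro p hp p₂ hp₂
    simp only [projSet, mem_iUnion] at hp hp₂
    obtain ⟨z, hz, hpz⟩ := hp
    obtain ⟨z₂, hz₂, hpz₂⟩ := hp₂
    obtain ⟨p', hp'mem, hp'dist⟩ := hγ'c.exists_infDist_eq_dist hγ'ne z
    obtain ⟨p₂', hp₂'mem, hp₂'dist⟩ := hγ'c.exists_infDist_eq_dist hγ'ne z₂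
    have hp' : p' ∈ proj γ' z := ⟨hp'mem, hp'dist.symm⟩
    have hp₂' : p₂' ∈ proj γ' z₂ := ⟨hp₂'mem, hp₂'dist.symm⟩
    have h1 := key z hz p hpz p' hp'
    have h2 := key z₂ hz₂ p₂ hpz₂ p₂' hp₂'
    have h3 : dist p' p₂' ≤ diam (projSet γ' κ) := by
      apply dist_le_diam_of_mem hbdd'
      · simp only [projSet, mem_iUnion]; exact ⟨z, hz, hp'⟩
      · simp only [projSet, mem_iUnion]; exact ⟨z₂, hz₂, hp₂'⟩
    calc dist p p₂ ≤ dist p p' + dist p' p₂' + dist p₂' p₂ := dist_triangle4 _ _ _ _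
      _ ≤ (3 * C + 4 * D) + D + (3 * C + 4 * D) := by
          rw [dist_comm p₂' p₂]; linarith [h3.trans hdiam'.le]
      _ = 6 * C + 9 * D := by ring
  linarith
end
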